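/- arXiv:1509.09111 — 12 statements merged into one kernel-verified Lean document; each statement's English description precedes it below -/
import Mathlib

section
/- For every positive integer n with n ≡ 0 or 1 (mod 4), the map (x,y,z) ↦ (x, 2y, z/2) is a bijection from the set of integer solutions of x² + 8y² + 10z² = n to the set of integer solutions of x² + 2y² + 40z² = n. In particular r(n, ⟨1,8,10⟩) = r(n, ⟨1,2,40⟩) for all such n. -/
lemma sq4 (x : ℤ) : x ^ 2 % 4 = 0 ∨ x ^ 2 % 4 = 1 := by
  rcases Int.even_or_odd x with ⟨m, hm⟩ | ⟨m, hm⟩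
  · left
    have h : x ^ 2 = 4 * m ^ 2 := by rw [hm]; ring
    rw [h]; omega
  · right
    have h : x ^ 2 = 4 * (m ^ 2 + m) + 1 := by rw [hm]; ring
    rw [h]; omega

lemma key (x w n : ℤ) (hn : n % 4 = 0 ∨ n % 4 = 1)
    (h : (x ^ 2 + 2 * w ^ 2 - n) % 4 = 0) : 2 ∣ w := by
  rcases Int.even_or_odd w with ⟨k, hk⟩ | ⟨k, hk⟩
  · exact ⟨k, by omega⟩
  · exfalso
    have hx := sq4 x
    have hw : w ^ 2 = 4 * (k ^ 2 + k) + 1 := by rw [hk]; ring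
    rw [hw] at h
    omega

lemma zdvd (x y z n : ℤ) (hn : n % 4 = 0 ∨ n % 4 = 1)
    (h : x ^ 2 + 8 * y ^ 2 + 10 * z ^ 2 = n) : 2 ∣ z := by
  apply key x z n hn
  have : x ^ 2 + 2 * z ^ 2 - n = 4 * (-2 * y ^ 2 - 2 * z ^ 2) := by linarith
  omega

lemma bdvd (a b c n : ℤ) (hn : n % 4 = 0 ∨ n % 4 = 1)
    (h : a ^ 2 + 2 * b ^ 2 + 40 * c ^ 2 = n) : 2 ∣ b := by
  apply key a b n hn
  have : a ^ 2 + 2 * b ^ 2 - n = 4 * (-10 * c ^ 2) := by linarith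
  omega

theorem stmt0 (n : ℕ) (hn : 0 < n) (h4 : n % 4 = 0 ∨ n % 4 = 1) :
    Set.BijOn (fun p : ℤ × ℤ × ℤ => (p.1, 2 * p.2.1, p.2.2 / 2))
      {p : ℤ × ℤ × ℤ | p.1 ^ 2 + 8 * p.2.1 ^ 2 + 10 * p.2.2 ^ 2 = (n : ℤ)}
      {p : ℤ × ℤ × ℤ | p.1 ^ 2 + 2 * p.2.1 ^ 2 + 40 * p.2.2 ^ 2 = (n : ℤ)} ∧
    Nat.card {p : ℤ × ℤ × ℤ | p.1 ^ 2 + 8 * p.2.1 ^ 2 + 10 * p.2.2 ^ 2 = (n : ℤ)} =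
      Nat.card {p : ℤ × ℤ × ℤ | p.1 ^ 2 + 2 * p.2.1 ^ 2 + 40 * p.2.2 ^ 2 = (n : ℤ)} := by
  have hn4 : (n : ℤ) % 4 = 0 ∨ (n : ℤ) % 4 = 1 := by omega
  have hbij : Set.BijOn (fun p : ℤ × ℤ × ℤ => (p.1, 2 * p.2.1, p.2.2 / 2))
      {p : ℤ × ℤ × ℤ | p.1 ^ 2 + 8 * p.2.1 ^ 2 + 10 * p.2.2 ^ 2 = (n : ℤ)}
      {p : ℤ × ℤ × ℤ | p.1 ^ 2 + 2 * p.2.1 ^ 2 + 40 * p.2.2 ^ 2 = (n : ℤ)} := by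
    refine ⟨?_, ?_, ?_⟩
    · rintro ⟨x, y, z⟩ hp
      simp only [Set.mem_setOf_eq] at hp ⊢
      obtain ⟨k, rfl⟩ := zdvd x y z n hn4 hp
      rw [Int.mul_ediv_cancel_left _ (by norm_num)]
      ring_nf
      ring_nf at hp
      linarith
    · rintro ⟨x, y, z⟩ hp ⟨a, b, c⟩ hq heq
      simp only [Set.mem_setOf_eq] at hp hq
      simp only [Prod.mk.injEq] at heq
      obtain ⟨h1, h2, h3⟩ := heq
      obtain ⟨k, rfl⟩ := zdvd x y z n hn4 hp
      obtain ⟨m, rfl⟩ := zdvd a b c n hn4 hq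
      rw [Int.mul_ediv_cancel_left _ (by norm_num),
        Int.mul_ediv_cancel_left _ (by norm_num)] at h3
      refine Prod.ext h1 (Prod.ext ?_ ?_) <;> simp <;> omega
    · rintro ⟨a, b, c⟩ hq
      simp only [Set.mem_setOf_eq] at hq
      obtain ⟨m, rfl⟩ := bdvd a b c n hn4 hq
      refine ⟨(a, m, 2 * c), ?_, ?_⟩
      · simp only [Set.mem_setOf_eq]
        ring_nf
        ring_nf at hq
        linarith
      · simp only [Prod.mk.injEq]
        exact ⟨trivial, trivial, Int.mul_ediv_cancel_left _ (by norm_num)⟩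
  exact ⟨hbij, Nat.card_congr hbij.equiv⟩
end

section
/- For every positive integer n with n ≡ 0 or 1 (mod 4), the number of integer solutions of x² + 2y² + 22z² = n equals the number of integer solutions of x² + 6y² + 8z² + 4yz = n; an explicit bijection is given by (x,y,z) ↦ (x, 2z, (y−z)/2). -/
private lemma parity1 (n : ℕ) (h4 : n % 4 = 0 ∨ n % 4 = 1) (x y z : ℤ)
    (he : x ^ 2 + 2 * y ^ 2 + 22 * z ^ 2 = (n : ℤ)) : (y - z) % 2 = 0 := by
  rcases Int.even_or_odd x with ⟨a, rfl⟩ | ⟨a, rfl⟩ <;>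
  rcases Int.even_or_odd y with ⟨b, rfl⟩ | ⟨b, rfl⟩ <;>
  rcases Int.even_or_odd z with ⟨c, rfl⟩ | ⟨c, rfl⟩ <;>
  ring_nf at he ⊢ <;> omega

private lemma parity2 (n : ℕ) (h4 : n % 4 = 0 ∨ n % 4 = 1) (a b c : ℤ)
    (he : a ^ 2 + 6 * b ^ 2 + 8 * c ^ 2 + 4 * b * c = (n : ℤ)) : b % 2 = 0 := by
  rcases Int.even_or_odd a with ⟨x, rfl⟩ | ⟨x, rfl⟩ <;>
  rcases Int.even_or_odd b with ⟨y, rfl⟩ | ⟨y, rfl⟩ <;>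
  ring_nf at he ⊢ <;> omega

theorem stmt1 (n : ℕ) (hn : 0 < n) (h4 : n % 4 = 0 ∨ n % 4 = 1) :
    Nat.card {p : ℤ × ℤ × ℤ | p.1 ^ 2 + 2 * p.2.1 ^ 2 + 22 * p.2.2 ^ 2 = (n : ℤ)} =
      Nat.card {p : ℤ × ℤ × ℤ |
        p.1 ^ 2 + 6 * p.2.1 ^ 2 + 8 * p.2.2 ^ 2 + 4 * p.2.1 * p.2.2 = (n : ℤ)} ∧
    Set.BijOn (fun p : ℤ × ℤ × ℤ => (p.1, 2 * p.2.2, (p.2.1 - p.2.2) / 2))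
      {p : ℤ × ℤ × ℤ | p.1 ^ 2 + 2 * p.2.1 ^ 2 + 22 * p.2.2 ^ 2 = (n : ℤ)}
      {p : ℤ × ℤ × ℤ |
        p.1 ^ 2 + 6 * p.2.1 ^ 2 + 8 * p.2.2 ^ 2 + 4 * p.2.1 * p.2.2 = (n : ℤ)} := by
  have key : Set.BijOn (fun p : ℤ × ℤ × ℤ => (p.1, 2 * p.2.2, (p.2.1 - p.2.2) / 2))
      {p : ℤ × ℤ × ℤ | p.1 ^ 2 + 2 * p.2.1 ^ 2 + 22 * p.2.2 ^ 2 = (n : ℤ)}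
      {p : ℤ × ℤ × ℤ |
        p.1 ^ 2 + 6 * p.2.1 ^ 2 + 8 * p.2.2 ^ 2 + 4 * p.2.1 * p.2.2 = (n : ℤ)} := by
    refine ⟨?_, ?_, ?_⟩
    · rintro ⟨x, y, z⟩ he
      simp only [Set.mem_setOf_eq] at he ⊢
      have hp := parity1 n h4 x y z he
      have hy : y = 2 * ((y - z) / 2) + z := by omega
      set d := (y - z) / 2 with hd
      rw [hy] at he
      linear_combination he
    · rintro ⟨x1, y1, z1⟩ h1 ⟨x2, y2, z2⟩ h2 heq
      simp only [Set.mem_setOf_eq] at h1 h2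
      have hp1 := parity1 n h4 x1 y1 z1 h1
      have hp2 := parity1 n h4 x2 y2 z2 h2
      simp only [Prod.mk.injEq] at heq
      obtain ⟨e1, e2, e3⟩ := heq
      have : z1 = z2 := by omega
      have : y1 = y2 := by omega
      simp_all
    · rintro ⟨a, b, c⟩ he
      simp only [Set.mem_setOf_eq] at he
      have hp := parity2 n h4 a b c he
      obtain ⟨m, rfl⟩ : ∃ m, b = 2 * m := ⟨b / 2, by omega⟩
      refine ⟨(a, 2 * c + m, m), ?_, ?_⟩
      · simp only [Set.mem_setOf_eq]
        linear_combination he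
      · simp only [Prod.mk.injEq]
        refine ⟨trivial, trivial, by omega⟩
  exact ⟨Nat.card_congr (Set.BijOn.equiv _ key), key⟩
end

section
/- For every positive integer n with n ≡ 0 or 1 (mod 4), the number of integer solutions of x² + 2y² + 70z² = n equals the number of integer solutions of x² + 8y² + 18z² + 4yz = n; an explicit bijection is given by (x,y,z) ↦ (x, (y−z)/2, 2z). -/
lemma par1 {x y z : ℤ} {n : ℕ} (h4 : n % 4 = 0 ∨ n % 4 = 1)
    (h : x ^ 2 + 2 * y ^ 2 + 70 * z ^ 2 = (n : ℤ)) : (y - z) % 2 = 0 := by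
  rcases Int.even_or_odd y with ⟨b, hb⟩ | ⟨b, hb⟩ <;>
    rcases Int.even_or_odd z with ⟨c, hc⟩ | ⟨c, hc⟩ <;> subst hb hc
  · omega
  · rcases Int.even_or_odd x with ⟨a, ha⟩ | ⟨a, ha⟩ <;> subst ha
    · have h' : (n : ℤ) = 4 * (a * a + 2 * (b * b) + 70 * (c * c) + 70 * c) + 70 := by
        rw [← h]; ring
      omega
    · have h' : (n : ℤ) = 4 * (a * a + a + 2 * (b * b) + 70 * (c * c) + 70 * c) + 71 := by
        rw [← h]; ring
      omega
  · rcases Int.even_or_odd x with ⟨a, ha⟩ | ⟨a, ha⟩ <;> subst ha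
    · have h' : (n : ℤ) = 4 * (a * a + 2 * (b * b) + 2 * b + 70 * (c * c)) + 2 := by
        rw [← h]; ring
      omega
    · have h' : (n : ℤ) = 4 * (a * a + a + 2 * (b * b) + 2 * b + 70 * (c * c)) + 3 := by
        rw [← h]; ring
      omega
  · omega

lemma par2 {x u v : ℤ} {n : ℕ} (h4 : n % 4 = 0 ∨ n % 4 = 1)
    (h : x ^ 2 + 8 * u ^ 2 + 18 * v ^ 2 + 4 * u * v = (n : ℤ)) : v % 2 = 0 := by
  rcases Int.even_or_odd v with ⟨c, hc⟩ | ⟨c, hc⟩ <;> subst hc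
  · omega
  · rcases Int.even_or_odd x with ⟨a, ha⟩ | ⟨a, ha⟩ <;> subst ha
    · have h' : (n : ℤ) = 4 * (a * a + 2 * (u * u) + 18 * (c * c) + 18 * c
          + 2 * (u * c) + u) + 18 := by rw [← h]; ring
      omega
    · have h' : (n : ℤ) = 4 * (a * a + a + 2 * (u * u) + 18 * (c * c) + 18 * c
          + 2 * (u * c) + u) + 19 := by rw [← h]; ring
      omega

theorem stmt2 (n : ℕ) (hn : 0 < n) (h4 : n % 4 = 0 ∨ n % 4 = 1) :
    Nat.card {p : ℤ × ℤ × ℤ | p.1 ^ 2 + 2 * p.2.1 ^ 2 + 70 * p.2.2 ^ 2 = (n : ℤ)} =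
      Nat.card {p : ℤ × ℤ × ℤ |
        p.1 ^ 2 + 8 * p.2.1 ^ 2 + 18 * p.2.2 ^ 2 + 4 * p.2.1 * p.2.2 = (n : ℤ)} ∧
    Set.BijOn (fun p : ℤ × ℤ × ℤ => (p.1, (p.2.1 - p.2.2) / 2, 2 * p.2.2))
      {p : ℤ × ℤ × ℤ | p.1 ^ 2 + 2 * p.2.1 ^ 2 + 70 * p.2.2 ^ 2 = (n : ℤ)}
      {p : ℤ × ℤ × ℤ |
        p.1 ^ 2 + 8 * p.2.1 ^ 2 + 18 * p.2.2 ^ 2 + 4 * p.2.1 * p.2.2 = (n : ℤ)} := by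
  have hbij : Set.BijOn (fun p : ℤ × ℤ × ℤ => (p.1, (p.2.1 - p.2.2) / 2, 2 * p.2.2))
      {p : ℤ × ℤ × ℤ | p.1 ^ 2 + 2 * p.2.1 ^ 2 + 70 * p.2.2 ^ 2 = (n : ℤ)}
      {p : ℤ × ℤ × ℤ |
        p.1 ^ 2 + 8 * p.2.1 ^ 2 + 18 * p.2.2 ^ 2 + 4 * p.2.1 * p.2.2 = (n : ℤ)} := by
    refine ⟨?_, ?_, ?_⟩
    · rintro ⟨x, y, z⟩ h
      simp only [Set.mem_setOf_eq] at h ⊢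
      obtain ⟨k, hk⟩ : (2 : ℤ) ∣ y - z := Int.dvd_of_emod_eq_zero (par1 h4 h)
      have hdiv : (y - z) / 2 = k := by omega
      rw [hdiv, ← h]
      have hy : y = z + 2 * k := by omega
      rw [hy]; ring
    · rintro ⟨x1, y1, z1⟩ h1 ⟨x2, y2, z2⟩ h2 heq
      simp only [Set.mem_setOf_eq] at h1 h2
      simp only [Prod.ext_iff] at heq ⊢
      obtain ⟨hx, hu, hv⟩ := heq
      have e1 := par1 h4 h1
      have e2 := par1 h4 h2
      refine ⟨hx, ?_, ?_⟩ <;> omega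
    · rintro ⟨x, u, v⟩ h
      simp only [Set.mem_setOf_eq] at h
      obtain ⟨c, hc⟩ : (2 : ℤ) ∣ v := Int.dvd_of_emod_eq_zero (par2 h4 h)
      refine ⟨(x, 2 * u + c, c), ?_, ?_⟩
      · simp only [Set.mem_setOf_eq]
        rw [← h, hc]; ring
      · simp only [Prod.ext_iff]
        refine ⟨trivial, by omega, by omega⟩
  refine ⟨Nat.card_congr (Set.BijOn.equiv _ hbij), hbij⟩
end

section
/- For every positive integer n with n ≡ 1 (mod 8), the number of integer solutions of x² + 3y² + 5z² = n equals the number of integer solutions of x² + 2y² + 2yz + 8z² = n. -/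
/-- The piece of the forward map handling class C (after the `U` rotation). -/
def phiC (p q r : ℤ) : ℤ × ℤ × ℤ :=
  if (r - q) % 8 = 0 then (p, (r - 5*q)/4, (q + 3*r)/4)
  else if (r - q) % 8 = 4 then (p, (q - 3*r)/2, (q + r)/2)
  else if (r + q) % 8 = 0 then (-p, (-r - 5*q)/4, (q - 3*r)/4)
  else (-p, (q + 3*r)/2, (q - r)/2)

/-- Forward map from solutions of x²+3y²+5z²=n to solutions of x²+2y²+2yz+8z²=n. -/
def phiF : ℤ × ℤ × ℤ → ℤ × ℤ × ℤ
  | (x, y, z) =>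
    if (y + z) % 2 = 0 then (x, y + z, (z - y)/2)
    else phiC ((x + 3*y)/2) ((x - y)/2) z

/-- Last piece of the inverse map (the `U` rotation, with a possible sign flip). -/
def psiU (X q r : ℤ) : ℤ × ℤ × ℤ :=
  if (X - q) % 4 = 0 then ((X + 3*q)/2, (X - q)/2, r)
  else ((-X + 3*q)/2, (-X - q)/2, -r)

/-- Inverse map on the odd-`Y` part. -/
def psiO (X Y Z : ℤ) : ℤ × ℤ × ℤ :=
  if (Z - 3*Y)/4 % 2 = 0 then psiU X ((Y + 3*Z)/2) ((Z - Y)/2)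
  else psiU X ((Z - 3*Y)/4) ((Y + 5*Z)/4)

/-- Inverse map from solutions of x²+2y²+2yz+8z²=n to solutions of x²+3y²+5z²=n. -/
def psiF : ℤ × ℤ × ℤ → ℤ × ℤ × ℤ
  | (X, Y, Z) =>
    if Y % 2 = 0 then (X, (Y - 2*Z)/2, (Y + 2*Z)/2)
    else psiO X Y Z

lemma sq_param (t : ℤ) :
    ∃ c, (t % 2 = 1 ∧ t^2 = 8*c + 1) ∨ (t % 4 = 0 ∧ t^2 = 8*c) ∨
      (t % 4 = 2 ∧ t^2 = 8*c + 4) := by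
  rcases (by omega : t % 2 = 1 ∨ t % 4 = 0 ∨ t % 4 = 2) with h | h | h
  · obtain ⟨k, rfl⟩ : ∃ k, t = 2*k + 1 := ⟨(t - 1)/2, by omega⟩
    obtain ⟨m, hm⟩ : ∃ m, k*(k+1) = 2*m :=
      (Int.even_mul_succ_self k).imp (fun m hm => by omega)
    exact ⟨m, Or.inl ⟨by omega, by linear_combination 4*hm⟩⟩
  · obtain ⟨k, rfl⟩ : ∃ k, t = 4*k := ⟨t/4, by omega⟩
    exact ⟨2*k^2, Or.inr (Or.inl ⟨by omega, by ring⟩)⟩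
  · obtain ⟨k, rfl⟩ : ∃ k, t = 4*k + 2 := ⟨(t - 2)/4, by omega⟩
    exact ⟨2*k^2 + 2*k, Or.inr (Or.inr ⟨by omega, by ring⟩)⟩

lemma odd_mul_four (Y u : ℤ) (hY : Y % 2 = 1) (h : (Y * u) % 4 = 0) : u % 4 = 0 := by
  obtain ⟨k, rfl⟩ : ∃ k, Y = 2*k + 1 := ⟨(Y - 1)/2, by omega⟩
  rcases (by omega : u % 4 = 0 ∨ u % 4 = 1 ∨ u % 4 = 2 ∨ u % 4 = 3) with h4 | h4 | h4 | h4
  · exact h4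
  · obtain ⟨m, rfl⟩ : ∃ m, u = 4*m + 1 := ⟨(u - 1)/4, by omega⟩
    have key : (2*k+1)*(4*m+1) = 4*((2*k+1)*m) + 2*k + 1 := by ring
    omega
  · obtain ⟨m, rfl⟩ : ∃ m, u = 4*m + 2 := ⟨(u - 2)/4, by omega⟩
    have key : (2*k+1)*(4*m+2) = 4*((2*k+1)*m + k) + 2 := by ring
    omega
  · obtain ⟨m, rfl⟩ : ∃ m, u = 4*m + 3 := ⟨(u - 3)/4, by omega⟩
    have key : (2*k+1)*(4*m+3) = 4*((2*k+1)*m + k) + 2*k + 3 := by ring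
    omega

lemma lClass (N x y z : ℤ) (h : x^2 + 3*y^2 + 5*z^2 = N) (hN : N % 8 = 1)
    (hC : (y + z) % 2 = 1) :
    x % 2 = 0 ∧ y % 2 = 0 ∧ z % 2 = 1 ∧ (x - y) % 4 = 2 := by
  obtain ⟨a, ha⟩ := sq_param x
  obtain ⟨b, hb⟩ := sq_param y
  obtain ⟨c, hc⟩ := sq_param z
  rcases ha with ⟨h1, h2⟩ | ⟨h1, h2⟩ | ⟨h1, h2⟩ <;>
    rcases hb with ⟨h3, h4⟩ | ⟨h3, h4⟩ | ⟨h3, h4⟩ <;>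
      rcases hc with ⟨h5, h6⟩ | ⟨h5, h6⟩ | ⟨h5, h6⟩ <;>
        rw [h2, h4, h6] at h <;> omega

lemma mClass (N X Y Z : ℤ) (h : X^2 + 2*Y^2 + 2*Y*Z + 8*Z^2 = N) (hN : N % 8 = 1)
    (hY : Y % 2 = 1) : X % 2 = 1 ∧ (Y + Z) % 4 = 0 := by
  obtain ⟨a, ha⟩ := sq_param X
  obtain ⟨c, hc⟩ : ∃ c, Z^2 = c := ⟨_, rfl⟩
  obtain ⟨w, hw, hw2⟩ : ∃ w, Y*(Y+Z) = w ∧ X^2 + 2*w + 8*c = N :=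
    ⟨Y*(Y+Z), rfl, by rw [← hc]; linear_combination h⟩
  have hX : X % 2 = 1 := by
    rcases ha with ⟨h1, h2⟩ | ⟨h1, h2⟩ | ⟨h1, h2⟩ <;> omega
  refine ⟨hX, ?_⟩
  have hw4 : w % 4 = 0 := by
    rcases ha with ⟨h1, h2⟩ | ⟨h1, h2⟩ | ⟨h1, h2⟩ <;> omega
  exact odd_mul_four Y (Y+Z) hY (by rw [hw]; exact hw4)

lemma phi_both (N x y z : ℤ) (h : x^2 + 3*y^2 + 5*z^2 = N) (hN : N % 8 = 1) :
    ((phiF (x, y, z)).1^2 + 2*(phiF (x, y, z)).2.1^2 +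
      2*(phiF (x, y, z)).2.1*(phiF (x, y, z)).2.2 + 8*(phiF (x, y, z)).2.2^2 = N) ∧
    psiF (phiF (x, y, z)) = (x, y, z) := by
  by_cases h1 : (y + z) % 2 = 0
  · obtain ⟨k, rfl⟩ : ∃ k, z = y + 2*k := ⟨(z - y)/2, by omega⟩
    have e : phiF (x, y, y + 2*k) = (x, 2*y + 2*k, k) := by
      simp only [phiF]
      rw [if_pos (by omega)]
      simp only [Prod.mk.injEq]
      exact ⟨trivial, by omega, by omega⟩
    rw [e]
    constructor
    · show x^2 + 2*(2*y+2*k)^2 + 2*(2*y+2*k)*k + 8*k^2 = N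
      linear_combination h
    · show psiF (x, 2*y + 2*k, k) = (x, y, y + 2*k)
      simp only [psiF]
      rw [if_pos (by omega)]
      simp only [Prod.mk.injEq]
      exact ⟨trivial, by omega, by omega⟩
  · obtain ⟨hx2, hy2, hz2, hxy⟩ := lClass N x y z h hN (by omega)
    obtain ⟨b, rfl⟩ : ∃ b, y = 2*b := ⟨y/2, by omega⟩
    obtain ⟨k, rfl⟩ : ∃ k, x = 2*b + 4*k + 2 := ⟨(x - 2*b - 2)/4, by omega⟩
    rcases (by omega : (z - 2*k - 1) % 8 = 0 ∨ (z - 2*k - 1) % 8 = 4 ∨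
        (z + 2*k + 1) % 8 = 0 ∨ (z + 2*k + 1) % 8 = 4) with hb | hb | hb | hb
    · obtain ⟨t, rfl⟩ : ∃ t, z = 2*k + 1 + 8*t := ⟨(z - 2*k - 1)/8, by omega⟩
      have e : phiF (2*b + 4*k + 2, 2*b, 2*k + 1 + 8*t) =
          (4*b + 2*k + 1, 2*t - 2*k - 1, 2*k + 1 + 6*t) := by
        simp only [phiF, phiC]
        rw [if_neg (by omega), if_pos (by omega)]
        simp only [Prod.mk.injEq]
        exact ⟨by omega, by omega, by omega⟩
      rw [e]
      constructor
      · show (4*b+2*k+1)^2 + 2*(2*t-2*k-1)^2 + 2*(2*t-2*k-1)*(2*k+1+6*t) +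
            8*(2*k+1+6*t)^2 = N
        linear_combination h
      · show psiF (4*b + 2*k + 1, 2*t - 2*k - 1, 2*k + 1 + 6*t) =
            (2*b + 4*k + 2, 2*b, 2*k + 1 + 8*t)
        simp only [psiF, psiO, psiU]
        rw [if_neg (by omega), if_neg (by omega), if_pos (by omega)]
        simp only [Prod.mk.injEq]
        exact ⟨by omega, by omega, by omega⟩
    · obtain ⟨t, rfl⟩ : ∃ t, z = 2*k + 5 + 8*t := ⟨(z - 2*k - 5)/8, by omega⟩
      have e : phiF (2*b + 4*k + 2, 2*b, 2*k + 5 + 8*t) =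
          (4*b + 2*k + 1, -2*k - 7 - 12*t, 2*k + 3 + 4*t) := by
        simp only [phiF, phiC]
        rw [if_neg (by omega), if_neg (by omega), if_pos (by omega)]
        simp only [Prod.mk.injEq]
        exact ⟨by omega, by omega, by omega⟩
      rw [e]
      constructor
      · show (4*b+2*k+1)^2 + 2*(-2*k-7-12*t)^2 + 2*(-2*k-7-12*t)*(2*k+3+4*t) +
            8*(2*k+3+4*t)^2 = N
        linear_combination h
      · show psiF (4*b + 2*k + 1, -2*k - 7 - 12*t, 2*k + 3 + 4*t) =
            (2*b + 4*k + 2, 2*b, 2*k + 5 + 8*t)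
        simp only [psiF, psiO, psiU]
        rw [if_neg (by omega), if_pos (by omega), if_pos (by omega)]
        simp only [Prod.mk.injEq]
        exact ⟨by omega, by omega, by omega⟩
    · obtain ⟨t, rfl⟩ : ∃ t, z = -2*k - 1 + 8*t := ⟨(z + 2*k + 1)/8, by omega⟩
      have e : phiF (2*b + 4*k + 2, 2*b, -2*k - 1 + 8*t) =
          (-(4*b + 2*k + 1), -2*k - 1 - 2*t, 2*k + 1 - 6*t) := by
        simp only [phiF, phiC]
        rw [if_neg (by omega), if_neg (by omega), if_neg (by omega), if_pos (by omega)]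
        simp only [Prod.mk.injEq]
        exact ⟨by omega, by omega, by omega⟩
      rw [e]
      constructor
      · show (-(4*b+2*k+1))^2 + 2*(-2*k-1-2*t)^2 + 2*(-2*k-1-2*t)*(2*k+1-6*t) +
            8*(2*k+1-6*t)^2 = N
        linear_combination h
      · show psiF (-(4*b + 2*k + 1), -2*k - 1 - 2*t, 2*k + 1 - 6*t) =
            (2*b + 4*k + 2, 2*b, -2*k - 1 + 8*t)
        simp only [psiF, psiO, psiU]
        rw [if_neg (by omega), if_neg (by omega), if_neg (by omega)]
        simp only [Prod.mk.injEq]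
        exact ⟨by omega, by omega, by omega⟩
    · obtain ⟨t, rfl⟩ : ∃ t, z = -2*k + 3 + 8*t := ⟨(z + 2*k - 3)/8, by omega⟩
      have e : phiF (2*b + 4*k + 2, 2*b, -2*k + 3 + 8*t) =
          (-(4*b + 2*k + 1), -2*k + 5 + 12*t, 2*k - 1 - 4*t) := by
        simp only [phiF, phiC]
        rw [if_neg (by omega), if_neg (by omega), if_neg (by omega), if_neg (by omega)]
        simp only [Prod.mk.injEq]
        exact ⟨by omega, by omega, by omega⟩
      rw [e]
      constructor
      · show (-(4*b+2*k+1))^2 + 2*(-2*k+5+12*t)^2 + 2*(-2*k+5+12*t)*(2*k-1-4*t) +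
            8*(2*k-1-4*t)^2 = N
        linear_combination h
      · show psiF (-(4*b + 2*k + 1), -2*k + 5 + 12*t, 2*k - 1 - 4*t) =
            (2*b + 4*k + 2, 2*b, -2*k + 3 + 8*t)
        simp only [psiF, psiO, psiU]
        rw [if_neg (by omega), if_pos (by omega), if_neg (by omega)]
        simp only [Prod.mk.injEq]
        exact ⟨by omega, by omega, by omega⟩

lemma psi_both (N X Y Z : ℤ) (h : X^2 + 2*Y^2 + 2*Y*Z + 8*Z^2 = N) (hN : N % 8 = 1) :
    ((psiF (X, Y, Z)).1^2 + 3*(psiF (X, Y, Z)).2.1^2 + 5*(psiF (X, Y, Z)).2.2^2 = N) ∧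
    phiF (psiF (X, Y, Z)) = (X, Y, Z) := by
  by_cases h1 : Y % 2 = 0
  · obtain ⟨g, rfl⟩ : ∃ g, Y = 2*g := ⟨Y/2, by omega⟩
    have e : psiF (X, 2*g, Z) = (X, g - Z, g + Z) := by
      simp only [psiF]
      rw [if_pos (by omega)]
      simp only [Prod.mk.injEq]
      exact ⟨trivial, by omega, by omega⟩
    rw [e]
    constructor
    · show X^2 + 3*(g - Z)^2 + 5*(g + Z)^2 = N
      linear_combination h
    · show phiF (X, g - Z, g + Z) = (X, 2*g, Z)
      simp only [phiF]
      rw [if_pos (by omega)]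
      simp only [Prod.mk.injEq]
      exact ⟨trivial, by omega, by omega⟩
  · obtain ⟨hX, hYZ⟩ := mClass N X Y Z h hN (by omega)
    obtain ⟨a, rfl⟩ : ∃ a, Y = 2*a + 1 := ⟨(Y - 1)/2, by omega⟩
    obtain ⟨s, rfl⟩ : ∃ s, Z = -2*a - 1 + 4*s := ⟨(Z + 2*a + 1)/4, by omega⟩
    obtain ⟨f, rfl⟩ : ∃ f, X = 2*f + 1 := ⟨(X - 1)/2, by omega⟩
    rcases (by omega : s % 2 = 0 ∨ s % 2 = 1) with hs | hs
    · obtain ⟨u, rfl⟩ : ∃ u, s = 2*u := ⟨s/2, by omega⟩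
      rcases (by omega : ((2*f + 1) - (-2*a - 1 + 2*u)) % 4 = 0 ∨
          ((2*f + 1) - (-2*a - 1 + 2*u)) % 4 = 2) with hf | hf
      · have e : psiF (2*f + 1, 2*a + 1, -2*a - 1 + 4*(2*u)) =
            (f - 3*a - 1 + 3*u, f + a + 1 - u, -2*a - 1 + 10*u) := by
          simp only [psiF, psiO, psiU]
          rw [if_neg (by omega), if_neg (by omega), if_pos (by omega)]
          simp only [Prod.mk.injEq]
          exact ⟨by omega, by omega, by omega⟩
        rw [e]
        constructor
        · show (f-3*a-1+3*u)^2 + 3*(f+a+1-u)^2 + 5*(-2*a-1+10*u)^2 = N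
          linear_combination h
        · show phiF (f - 3*a - 1 + 3*u, f + a + 1 - u, -2*a - 1 + 10*u) =
              (2*f + 1, 2*a + 1, -2*a - 1 + 4*(2*u))
          simp only [phiF, phiC]
          rw [if_neg (by omega), if_pos (by omega)]
          simp only [Prod.mk.injEq]
          exact ⟨by omega, by omega, by omega⟩
      · have e : psiF (2*f + 1, 2*a + 1, -2*a - 1 + 4*(2*u)) =
            (-f - 3*a - 2 + 3*u, -f + a - u, 2*a + 1 - 10*u) := by
          simp only [psiF, psiO, psiU]
          rw [if_neg (by omega), if_neg (by omega), if_neg (by omega)]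
          simp only [Prod.mk.injEq]
          exact ⟨by omega, by omega, by omega⟩
        rw [e]
        constructor
        · show (-f-3*a-2+3*u)^2 + 3*(-f+a-u)^2 + 5*(2*a+1-10*u)^2 = N
          linear_combination h
        · show phiF (-f - 3*a - 2 + 3*u, -f + a - u, 2*a + 1 - 10*u) =
              (2*f + 1, 2*a + 1, -2*a - 1 + 4*(2*u))
          simp only [phiF, phiC]
          rw [if_neg (by omega), if_neg (by omega), if_neg (by omega), if_pos (by omega)]
          simp only [Prod.mk.injEq]
          exact ⟨by omega, by omega, by omega⟩
    · obtain ⟨u, rfl⟩ : ∃ u, s = 2*u + 1 := ⟨(s - 1)/2, by omega⟩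
      rcases (by omega : ((2*f + 1) - (-2*a + 5 + 12*u)) % 4 = 0 ∨
          ((2*f + 1) - (-2*a + 5 + 12*u)) % 4 = 2) with hf | hf
      · have e : psiF (2*f + 1, 2*a + 1, -2*a - 1 + 4*(2*u + 1)) =
            (f - 3*a + 8 + 18*u, f + a - 2 - 6*u, -2*a + 1 + 4*u) := by
          simp only [psiF, psiO, psiU]
          rw [if_neg (by omega), if_pos (by omega), if_pos (by omega)]
          simp only [Prod.mk.injEq]
          exact ⟨by omega, by omega, by omega⟩
        rw [e]
        constructor
        · show (f-3*a+8+18*u)^2 + 3*(f+a-2-6*u)^2 + 5*(-2*a+1+4*u)^2 = N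
          linear_combination h
        · show phiF (f - 3*a + 8 + 18*u, f + a - 2 - 6*u, -2*a + 1 + 4*u) =
              (2*f + 1, 2*a + 1, -2*a - 1 + 4*(2*u + 1))
          simp only [phiF, phiC]
          rw [if_neg (by omega), if_neg (by omega), if_pos (by omega)]
          simp only [Prod.mk.injEq]
          exact ⟨by omega, by omega, by omega⟩
      · have e : psiF (2*f + 1, 2*a + 1, -2*a - 1 + 4*(2*u + 1)) =
            (-f - 3*a + 7 + 18*u, -f + a - 3 - 6*u, 2*a - 1 - 4*u) := by
          simp only [psiF, psiO, psiU]
          rw [if_neg (by omega), if_pos (by omega), if_neg (by omega)]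
          simp only [Prod.mk.injEq]
          exact ⟨by omega, by omega, by omega⟩
        rw [e]
        constructor
        · show (-f-3*a+7+18*u)^2 + 3*(-f+a-3-6*u)^2 + 5*(2*a-1-4*u)^2 = N
          linear_combination h
        · show phiF (-f - 3*a + 7 + 18*u, -f + a - 3 - 6*u, 2*a - 1 - 4*u) =
              (2*f + 1, 2*a + 1, -2*a - 1 + 4*(2*u + 1))
          simp only [phiF, phiC]
          rw [if_neg (by omega), if_neg (by omega), if_neg (by omega), if_neg (by omega)]
          simp only [Prod.mk.injEq]
          exact ⟨by omega, by omega, by omega⟩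

theorem stmt3 (n : ℕ) (hn : 0 < n) (h8 : n % 8 = 1) :
    Nat.card {p : ℤ × ℤ × ℤ | p.1 ^ 2 + 3 * p.2.1 ^ 2 + 5 * p.2.2 ^ 2 = (n : ℤ)} =
      Nat.card {p : ℤ × ℤ × ℤ |
        p.1 ^ 2 + 2 * p.2.1 ^ 2 + 2 * p.2.1 * p.2.2 + 8 * p.2.2 ^ 2 = (n : ℤ)} := by
  have hN : (n : ℤ) % 8 = 1 := by omega
  refine Nat.card_congr ?_
  refine
    { toFun := fun v => ⟨phiF v.1, ?_⟩
      invFun := fun w => ⟨psiF w.1, ?_⟩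
      left_inv := fun v => ?_
      right_inv := fun w => ?_ }
  · have hv : (v.1).1^2 + 3*(v.1).2.1^2 + 5*(v.1).2.2^2 = (n : ℤ) := by
      exact v.2
    exact (phi_both (n : ℤ) (v.1).1 (v.1).2.1 (v.1).2.2 hv hN).1
  · have hw : (w.1).1^2 + 2*(w.1).2.1^2 + 2*(w.1).2.1*(w.1).2.2 + 8*(w.1).2.2^2 = (n : ℤ) := by
      exact w.2
    exact (psi_both (n : ℤ) (w.1).1 (w.1).2.1 (w.1).2.2 hw hN).1
  · apply Subtype.ext
    have hv : (v.1).1^2 + 3*(v.1).2.1^2 + 5*(v.1).2.2^2 = (n : ℤ) := by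
      exact v.2
    exact (phi_both (n : ℤ) (v.1).1 (v.1).2.1 (v.1).2.2 hv hN).2
  · apply Subtype.ext
    have hw : (w.1).1^2 + 2*(w.1).2.1^2 + 2*(w.1).2.1*(w.1).2.2 + 8*(w.1).2.2^2 = (n : ℤ) := by
      exact w.2
    exact (psi_both (n : ℤ) (w.1).1 (w.1).2.1 (w.1).2.2 hw hN).2
end

section
/- For every positive integer n with n ≡ 1 (mod 8), the number of integer solutions of x² + 3y² + 21z² = n equals the number of integer solutions of x² + 6y² + 6yz + 12z² = n. -/
/-- The map from solutions of `x² + 3y² + 21z² = n` to solutions of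
`x² + 6y² + 6yz + 12z² = n` (for `n ≡ 1 mod 8`). -/
def psiAux (p : ℤ × ℤ × ℤ) : ℤ × ℤ × ℤ :=
  if (p.2.1 - p.2.2) % 2 = 0 then (p.1, (p.2.1 + 3 * p.2.2) / 2, (p.2.2 - p.2.1) / 2)
  else if (p.1 - p.2.1 + 2 * p.2.2) % 8 = 0 then
    (-(p.1 + 3 * p.2.1) / 2, -2 * p.2.2, (-p.1 + p.2.1 + 2 * p.2.2) / 4)
  else
    (-(p.1 + 3 * p.2.1) / 2, -2 * p.2.2, (p.1 - p.2.1 + 2 * p.2.2) / 4)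

/-- The inverse map. -/
def phiAux (p : ℤ × ℤ × ℤ) : ℤ × ℤ × ℤ :=
  if (p.2.1 - p.2.2) % 2 = 0 then (p.1, (p.2.1 - 3 * p.2.2) / 2, (p.2.1 + p.2.2) / 2)
  else if (2 * p.1 + p.2.1) % 8 = 0 then
    (-(2 * p.1 + 3 * p.2.1 + 12 * p.2.2) / 4, (-2 * p.1 + p.2.1 + 4 * p.2.2) / 4, -p.2.1 / 2)
  else
    ((-2 * p.1 + 3 * p.2.1 + 12 * p.2.2) / 4, -(2 * p.1 + p.2.1 + 4 * p.2.2) / 4, -p.2.1 / 2)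

lemma brute_l (a b c : ℤ) (ha : 0 ≤ a) (ha' : a < 8) (hb : 0 ≤ b) (hb' : b < 8)
    (hc : 0 ≤ c) (hc' : c < 8) (h : (a * a + 3 * (b * b) + 21 * (c * c)) % 8 = 1)
    (hbc : (b - c) % 2 ≠ 0) :
    b % 2 = 0 ∧ c % 2 = 1 ∧ (a - b + 2 * c) % 4 = 0 := by
  interval_cases a <;> interval_cases b <;> interval_cases c <;> omega

lemma brute_m (a b c : ℤ) (ha : 0 ≤ a) (ha' : a < 8) (hb : 0 ≤ b) (hb' : b < 8)
    (hc : 0 ≤ c) (hc' : c < 8)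
    (h : (a * a + 6 * (b * b) + 6 * (b * c) + 12 * (c * c)) % 8 = 1)
    (hbc : (b - c) % 2 ≠ 0) :
    a % 2 = 1 ∧ b % 4 = 2 ∧ c % 2 = 1 := by
  interval_cases a <;> interval_cases b <;> interval_cases c <;> omega

lemma res_l (x y z n : ℤ) (h : x ^ 2 + 3 * y ^ 2 + 21 * z ^ 2 = n) (h8 : n % 8 = 1)
    (hbc : (y - z) % 2 ≠ 0) :
    y % 2 = 0 ∧ z % 2 = 1 ∧ (x - y + 2 * z) % 4 = 0 := by
  have e1 : x ≡ x % 8 [ZMOD 8] := by unfold Int.ModEq; omega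
  have e2 : y ≡ y % 8 [ZMOD 8] := by unfold Int.ModEq; omega
  have e3 : z ≡ z % 8 [ZMOD 8] := by unfold Int.ModEq; omega
  have E : x * x + 3 * (y * y) + 21 * (z * z) ≡
      (x % 8) * (x % 8) + 3 * ((y % 8) * (y % 8)) + 21 * ((z % 8) * (z % 8)) [ZMOD 8] :=
    (((e1.mul e1).add ((e2.mul e2).mul_left 3)).add ((e3.mul e3).mul_left 21))
  have hval : x * x + 3 * (y * y) + 21 * (z * z) = n := by linear_combination h
  have hE := E; unfold Int.ModEq at hE
  have h1 : ((x % 8) * (x % 8) + 3 * ((y % 8) * (y % 8)) + 21 * ((z % 8) * (z % 8))) % 8 = 1 := by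
    omega
  have := brute_l (x % 8) (y % 8) (z % 8) (by omega) (by omega) (by omega) (by omega)
    (by omega) (by omega) (by omega) (by omega)
  omega

lemma res_m (x y z n : ℤ) (h : x ^ 2 + 6 * y ^ 2 + 6 * y * z + 12 * z ^ 2 = n) (h8 : n % 8 = 1)
    (hbc : (y - z) % 2 ≠ 0) :
    x % 2 = 1 ∧ y % 4 = 2 ∧ z % 2 = 1 := by
  have e1 : x ≡ x % 8 [ZMOD 8] := by unfold Int.ModEq; omega
  have e2 : y ≡ y % 8 [ZMOD 8] := by unfold Int.ModEq; omega
  have e3 : z ≡ z % 8 [ZMOD 8] := by unfold Int.ModEq; omega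
  have E : x * x + 6 * (y * y) + 6 * (y * z) + 12 * (z * z) ≡
      (x % 8) * (x % 8) + 6 * ((y % 8) * (y % 8)) + 6 * ((y % 8) * (z % 8))
        + 12 * ((z % 8) * (z % 8)) [ZMOD 8] :=
    ((((e1.mul e1).add ((e2.mul e2).mul_left 6)).add ((e2.mul e3).mul_left 6)).add
      ((e3.mul e3).mul_left 12))
  have hval : x * x + 6 * (y * y) + 6 * (y * z) + 12 * (z * z) = n := by linear_combination h
  have hE := E; unfold Int.ModEq at hE
  have h1 : ((x % 8) * (x % 8) + 6 * ((y % 8) * (y % 8)) + 6 * ((y % 8) * (z % 8))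
      + 12 * ((z % 8) * (z % 8))) % 8 = 1 := by omega
  have := brute_m (x % 8) (y % 8) (z % 8) (by omega) (by omega) (by omega) (by omega)
    (by omega) (by omega) (by omega) (by omega)
  omega

lemma psi_maps (n : ℤ) (h8 : n % 8 = 1) (X Y Z : ℤ)
    (hp : X ^ 2 + 3 * Y ^ 2 + 21 * Z ^ 2 = n) :
    (psiAux (X, Y, Z)).1 ^ 2 + 6 * (psiAux (X, Y, Z)).2.1 ^ 2 +
      6 * (psiAux (X, Y, Z)).2.1 * (psiAux (X, Y, Z)).2.2 +
      12 * (psiAux (X, Y, Z)).2.2 ^ 2 = n := by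
  unfold psiAux
  dsimp only
  by_cases hA : (Y - Z) % 2 = 0
  · rw [if_pos hA]
    obtain ⟨a, ha⟩ : ∃ a, Y = 2 * a - 3 * Z := ⟨(Y + 3 * Z) / 2, by omega⟩
    subst ha
    rw [show (2 * a - 3 * Z + 3 * Z) / 2 = a by omega,
      show (Z - (2 * a - 3 * Z)) / 2 = 2 * Z - a by omega]
    dsimp only
    linear_combination hp
  · rw [if_neg hA]
    obtain ⟨hY, hZ, h4⟩ := res_l X Y Z n hp h8 hA
    by_cases hB : (X - Y + 2 * Z) % 8 = 0
    · rw [if_pos hB]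
      obtain ⟨c, hc⟩ : ∃ c, X = Y - 2 * Z + 8 * c := ⟨(X - Y + 2 * Z) / 8, by omega⟩
      subst hc
      rw [show -(Y - 2 * Z + 8 * c + 3 * Y) / 2 = -2 * Y + Z - 4 * c by omega,
        show (-(Y - 2 * Z + 8 * c) + Y + 2 * Z) / 4 = Z - 2 * c by omega]
      dsimp only
      linear_combination hp
    · rw [if_neg hB]
      obtain ⟨c, hc⟩ : ∃ c, X = Y - 2 * Z + 8 * c + 4 := ⟨(X - Y + 2 * Z - 4) / 8, by omega⟩
      subst hc
      rw [show -(Y - 2 * Z + 8 * c + 4 + 3 * Y) / 2 = -2 * Y + Z - 4 * c - 2 by omega,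
        show (Y - 2 * Z + 8 * c + 4 - Y + 2 * Z) / 4 = 2 * c + 1 by omega]
      dsimp only
      linear_combination hp

lemma phi_maps (n : ℤ) (h8 : n % 8 = 1) (x y z : ℤ)
    (hp : x ^ 2 + 6 * y ^ 2 + 6 * y * z + 12 * z ^ 2 = n) :
    (phiAux (x, y, z)).1 ^ 2 + 3 * (phiAux (x, y, z)).2.1 ^ 2 +
      21 * (phiAux (x, y, z)).2.2 ^ 2 = n := by
  unfold phiAux
  dsimp only
  by_cases hA : (y - z) % 2 = 0
  · rw [if_pos hA]
    obtain ⟨a, ha⟩ : ∃ a, y = 2 * a + 3 * z := ⟨(y - 3 * z) / 2, by omega⟩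
    subst ha
    rw [show (2 * a + 3 * z - 3 * z) / 2 = a by omega,
      show (2 * a + 3 * z + z) / 2 = a + 2 * z by omega]
    dsimp only
    linear_combination hp
  · rw [if_neg hA]
    obtain ⟨hx, hy, hz⟩ := res_m x y z n hp h8 hA
    by_cases hB : (2 * x + y) % 8 = 0
    · rw [if_pos hB]
      obtain ⟨w, hw⟩ : ∃ w, y = 4 * w + 2 := ⟨(y - 2) / 4, by omega⟩
      subst hw
      obtain ⟨c, hc⟩ : ∃ c, x = 4 * c - 2 * w - 1 := ⟨(2 * x + 4 * w + 2) / 8, by omega⟩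
      subst hc
      rw [show -(2 * (4 * c - 2 * w - 1) + 3 * (4 * w + 2) + 12 * z) / 4
            = -(2 * c + 2 * w + 1 + 3 * z) by omega,
        show (-2 * (4 * c - 2 * w - 1) + (4 * w + 2) + 4 * z) / 4
            = -2 * c + 2 * w + 1 + z by omega,
        show -(4 * w + 2) / 2 = -2 * w - 1 by omega]
      dsimp only
      linear_combination hp
    · rw [if_neg hB]
      obtain ⟨w, hw⟩ : ∃ w, y = 4 * w + 2 := ⟨(y - 2) / 4, by omega⟩
      subst hw
      obtain ⟨c, hc⟩ : ∃ c, x = 4 * c - 2 * w + 1 := ⟨(2 * x + 4 * w - 2) / 8, by omega⟩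
      subst hc
      rw [show (-2 * (4 * c - 2 * w + 1) + 3 * (4 * w + 2) + 12 * z) / 4
            = -2 * c + 4 * w + 1 + 3 * z by omega,
        show -(2 * (4 * c - 2 * w + 1) + (4 * w + 2) + 4 * z) / 4
            = -(2 * c + 1 + z) by omega,
        show -(4 * w + 2) / 2 = -2 * w - 1 by omega]
      dsimp only
      linear_combination hp

lemma phi_psi (n : ℤ) (h8 : n % 8 = 1) (X Y Z : ℤ)
    (hp : X ^ 2 + 3 * Y ^ 2 + 21 * Z ^ 2 = n) :
    phiAux (psiAux (X, Y, Z)) = (X, Y, Z) := by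
  unfold psiAux
  dsimp only
  by_cases hA : (Y - Z) % 2 = 0
  · rw [if_pos hA]
    obtain ⟨a, ha⟩ : ∃ a, Y = 2 * a - 3 * Z := ⟨(Y + 3 * Z) / 2, by omega⟩
    subst ha
    rw [show (2 * a - 3 * Z + 3 * Z) / 2 = a by omega,
      show (Z - (2 * a - 3 * Z)) / 2 = 2 * Z - a by omega]
    unfold phiAux
    dsimp only
    rw [if_pos (by omega)]
    refine Prod.ext (by omega) (Prod.ext (by dsimp only; omega) (by dsimp only; omega))
  · rw [if_neg hA]
    obtain ⟨hY, hZ, h4⟩ := res_l X Y Z n hp h8 hA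
    by_cases hB : (X - Y + 2 * Z) % 8 = 0
    · rw [if_pos hB]
      obtain ⟨c, hc⟩ : ∃ c, X = Y - 2 * Z + 8 * c := ⟨(X - Y + 2 * Z) / 8, by omega⟩
      subst hc
      rw [show -(Y - 2 * Z + 8 * c + 3 * Y) / 2 = -2 * Y + Z - 4 * c by omega,
        show (-(Y - 2 * Z + 8 * c) + Y + 2 * Z) / 4 = Z - 2 * c by omega]
      unfold phiAux
      dsimp only
      rw [if_neg (by omega), if_pos (by omega)]
      refine Prod.ext (by dsimp only; omega) (Prod.ext (by dsimp only; omega) (by dsimp only; omega))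
    · rw [if_neg hB]
      obtain ⟨c, hc⟩ : ∃ c, X = Y - 2 * Z + 8 * c + 4 := ⟨(X - Y + 2 * Z - 4) / 8, by omega⟩
      subst hc
      rw [show -(Y - 2 * Z + 8 * c + 4 + 3 * Y) / 2 = -2 * Y + Z - 4 * c - 2 by omega,
        show (Y - 2 * Z + 8 * c + 4 - Y + 2 * Z) / 4 = 2 * c + 1 by omega]
      unfold phiAux
      dsimp only
      rw [if_neg (by omega), if_neg (by omega)]
      refine Prod.ext (by dsimp only; omega) (Prod.ext (by dsimp only; omega) (by dsimp only; omega))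

lemma psi_phi (n : ℤ) (h8 : n % 8 = 1) (x y z : ℤ)
    (hp : x ^ 2 + 6 * y ^ 2 + 6 * y * z + 12 * z ^ 2 = n) :
    psiAux (phiAux (x, y, z)) = (x, y, z) := by
  unfold phiAux
  dsimp only
  by_cases hA : (y - z) % 2 = 0
  · rw [if_pos hA]
    obtain ⟨a, ha⟩ : ∃ a, y = 2 * a + 3 * z := ⟨(y - 3 * z) / 2, by omega⟩
    subst ha
    rw [show (2 * a + 3 * z - 3 * z) / 2 = a by omega,
      show (2 * a + 3 * z + z) / 2 = a + 2 * z by omega]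
    unfold psiAux
    dsimp only
    rw [if_pos (by omega)]
    refine Prod.ext (by omega) (Prod.ext (by dsimp only; omega) (by dsimp only; omega))
  · rw [if_neg hA]
    obtain ⟨hx, hy, hz⟩ := res_m x y z n hp h8 hA
    by_cases hB : (2 * x + y) % 8 = 0
    · rw [if_pos hB]
      obtain ⟨w, hw⟩ : ∃ w, y = 4 * w + 2 := ⟨(y - 2) / 4, by omega⟩
      subst hw
      obtain ⟨c, hc⟩ : ∃ c, x = 4 * c - 2 * w - 1 := ⟨(2 * x + 4 * w + 2) / 8, by omega⟩
      subst hc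
      rw [show -(2 * (4 * c - 2 * w - 1) + 3 * (4 * w + 2) + 12 * z) / 4
            = -(2 * c + 2 * w + 1 + 3 * z) by omega,
        show (-2 * (4 * c - 2 * w - 1) + (4 * w + 2) + 4 * z) / 4
            = -2 * c + 2 * w + 1 + z by omega,
        show -(4 * w + 2) / 2 = -2 * w - 1 by omega]
      unfold psiAux
      dsimp only
      rw [if_neg (by omega), if_pos (by omega)]
      refine Prod.ext (by dsimp only; omega) (Prod.ext (by dsimp only; omega) (by dsimp only; omega))
    · rw [if_neg hB]
      obtain ⟨w, hw⟩ : ∃ w, y = 4 * w + 2 := ⟨(y - 2) / 4, by omega⟩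
      subst hw
      obtain ⟨c, hc⟩ : ∃ c, x = 4 * c - 2 * w + 1 := ⟨(2 * x + 4 * w - 2) / 8, by omega⟩
      subst hc
      rw [show (-2 * (4 * c - 2 * w + 1) + 3 * (4 * w + 2) + 12 * z) / 4
            = -2 * c + 4 * w + 1 + 3 * z by omega,
        show -(2 * (4 * c - 2 * w + 1) + (4 * w + 2) + 4 * z) / 4
            = -(2 * c + 1 + z) by omega,
        show -(4 * w + 2) / 2 = -2 * w - 1 by omega]
      unfold psiAux
      dsimp only
      rw [if_neg (by omega), if_neg (by omega)]
      refine Prod.ext (by dsimp only; omega) (Prod.ext (by dsimp only; omega) (by dsimp only; omega))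

theorem stmt4 (n : ℕ) (hn : 0 < n) (h8 : n % 8 = 1) :
    Nat.card {p : ℤ × ℤ × ℤ | p.1 ^ 2 + 3 * p.2.1 ^ 2 + 21 * p.2.2 ^ 2 = (n : ℤ)} =
      Nat.card {p : ℤ × ℤ × ℤ |
        p.1 ^ 2 + 6 * p.2.1 ^ 2 + 6 * p.2.1 * p.2.2 + 12 * p.2.2 ^ 2 = (n : ℤ)} := by
  have h8' : (n : ℤ) % 8 = 1 := by omega
  refine Nat.card_congr ⟨fun p => ⟨psiAux p.1, ?_⟩, fun p => ⟨phiAux p.1, ?_⟩, ?_, ?_⟩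
  · obtain ⟨⟨X, Y, Z⟩, hp⟩ := p
    exact psi_maps (n : ℤ) h8' X Y Z hp
  · obtain ⟨⟨x, y, z⟩, hp⟩ := p
    exact phi_maps (n : ℤ) h8' x y z hp
  · rintro ⟨⟨X, Y, Z⟩, hp⟩
    exact Subtype.ext (phi_psi (n : ℤ) h8' X Y Z hp)
  · rintro ⟨⟨x, y, z⟩, hp⟩
    exact Subtype.ext (psi_phi (n : ℤ) h8' x y z hp)
end

section
/- For every integer n, the number of integer solutions of x² + 2y² + 2yz + 33z² = 4n² equals the number of such solutions for n². (If x² + 2y² + 2yz + 33z² = 4n², then x, y, z are all even.) -/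
lemma even_of_eq (x y z m : ℤ) (h : x ^ 2 + 2 * y ^ 2 + 2 * y * z + 33 * z ^ 2 = 4 * m) :
    2 ∣ x ∧ 2 ∣ y ∧ 2 ∣ z := by
  have h4 : ((x : ZMod 4)) ^ 2 + 2 * (y : ZMod 4) ^ 2 + 2 * (y : ZMod 4) * (z : ZMod 4)
      + 33 * (z : ZMod 4) ^ 2 = 0 := by
    have := congrArg (fun t : ℤ => (t : ZMod 4)) h
    push_cast at this
    rw [this]
    push_cast
    ring_nf
    rw [show (4:ZMod 4) = 0 by decide, mul_zero]
  have key : ∀ a b c : ZMod 4, a ^ 2 + 2 * b ^ 2 + 2 * b * c + 33 * c ^ 2 = 0 →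
      (ZMod.castHom (by norm_num : (2:ℕ) ∣ 4) (ZMod 2)) a = 0 ∧
      (ZMod.castHom (by norm_num : (2:ℕ) ∣ 4) (ZMod 2)) b = 0 ∧
      (ZMod.castHom (by norm_num : (2:ℕ) ∣ 4) (ZMod 2)) c = 0 := by decide
  obtain ⟨ha, hb, hc⟩ := key _ _ _ h4
  rw [map_intCast] at ha hb hc
  exact ⟨(ZMod.intCast_zmod_eq_zero_iff_dvd _ 2).mp ha,
    (ZMod.intCast_zmod_eq_zero_iff_dvd _ 2).mp hb,
    (ZMod.intCast_zmod_eq_zero_iff_dvd _ 2).mp hc⟩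

def fmap (n : ℤ) (p : {p : ℤ × ℤ × ℤ |
        p.1 ^ 2 + 2 * p.2.1 ^ 2 + 2 * p.2.1 * p.2.2 + 33 * p.2.2 ^ 2 = n ^ 2}) :
    {p : ℤ × ℤ × ℤ |
        p.1 ^ 2 + 2 * p.2.1 ^ 2 + 2 * p.2.1 * p.2.2 + 33 * p.2.2 ^ 2 = 4 * n ^ 2} :=
  ⟨(2 * p.1.1, 2 * p.1.2.1, 2 * p.1.2.2), by
    have hq := p.2
    simp only [Set.mem_setOf_eq] at hq ⊢
    nlinarith [hq]⟩

theorem stmt7 (n : ℤ) :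
    Nat.card {p : ℤ × ℤ × ℤ |
        p.1 ^ 2 + 2 * p.2.1 ^ 2 + 2 * p.2.1 * p.2.2 + 33 * p.2.2 ^ 2 = 4 * n ^ 2} =
      Nat.card {p : ℤ × ℤ × ℤ |
        p.1 ^ 2 + 2 * p.2.1 ^ 2 + 2 * p.2.1 * p.2.2 + 33 * p.2.2 ^ 2 = n ^ 2} := by
  have hf : Function.Bijective (fmap n) := by
    constructor
    · rintro ⟨⟨a, b, c⟩, hp⟩ ⟨⟨a', b', c'⟩, hp'⟩ h
      simp only [fmap, Subtype.mk.injEq, Prod.mk.injEq] at h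
      apply Subtype.ext
      simp only [Prod.mk.injEq]
      omega
    · rintro ⟨⟨x, y, z⟩, hp⟩
      simp only [Set.mem_setOf_eq] at hp
      obtain ⟨⟨a, rfl⟩, ⟨b, rfl⟩, ⟨c, rfl⟩⟩ := even_of_eq x y z (n ^ 2) hp
      refine ⟨⟨(a, b, c), ?_⟩, rfl⟩
      simp only [Set.mem_setOf_eq]
      nlinarith [hp]
  exact (Nat.card_congr (Equiv.ofBijective (fmap n) hf)).symm
end

section
/- For every integer n, the number of integer solutions of x² + 8y² + 13z² = 4n² equals the number of integer solutions of x² + 2y² + 13z² = n². -/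
private lemma sq_par (x : ℤ) : x ^ 2 % 4 = 0 ∧ x % 2 = 0 ∨ x ^ 2 % 4 = 1 ∧ x % 2 = 1 := by
  rcases Int.even_or_odd x with ⟨k, hk⟩ | ⟨k, hk⟩ <;> subst hk
  · left
    have h : (k + k) ^ 2 = 4 * (k * k) := by ring
    omega
  · right
    have h : (2 * k + 1) ^ 2 = 4 * (k * k + k) + 1 := by ring
    omega

private lemma even_of_sol (x y z n : ℤ) (h : x ^ 2 + 8 * y ^ 2 + 13 * z ^ 2 = 4 * n ^ 2) :
    2 ∣ x ∧ 2 ∣ z := by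
  have hx := sq_par x
  have hz := sq_par z
  set A := x ^ 2 with hA
  set B := y ^ 2 with hB
  set C := z ^ 2 with hC
  set D := n ^ 2 with hD
  constructor <;> [exact Int.dvd_of_emod_eq_zero (by omega); exact Int.dvd_of_emod_eq_zero (by omega)]

theorem stmt8 (n : ℤ) :
    Nat.card {p : ℤ × ℤ × ℤ | p.1 ^ 2 + 8 * p.2.1 ^ 2 + 13 * p.2.2 ^ 2 = 4 * n ^ 2} =
      Nat.card {p : ℤ × ℤ × ℤ | p.1 ^ 2 + 2 * p.2.1 ^ 2 + 13 * p.2.2 ^ 2 = n ^ 2} := by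
  apply Nat.card_congr
  refine ⟨fun p => ⟨(p.1.1 / 2, p.1.2.1, p.1.2.2 / 2), ?_⟩,
         fun q => ⟨(2 * q.1.1, q.1.2.1, 2 * q.1.2.2), ?_⟩, ?_, ?_⟩
  · obtain ⟨⟨x, y, z⟩, hp⟩ := p
    simp only [Set.mem_setOf_eq] at hp ⊢
    obtain ⟨⟨a, ha⟩, ⟨c, hc⟩⟩ := even_of_sol x y z n hp
    subst ha; subst hc
    rw [Int.mul_ediv_cancel_left _ (by norm_num), Int.mul_ediv_cancel_left _ (by norm_num)]
    nlinarith [hp]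
  · obtain ⟨⟨a, y, c⟩, hq⟩ := q
    simp only [Set.mem_setOf_eq] at hq ⊢
    nlinarith [hq]
  · rintro ⟨⟨x, y, z⟩, hp⟩
    simp only [Set.mem_setOf_eq] at hp
    obtain ⟨⟨a, ha⟩, ⟨c, hc⟩⟩ := even_of_sol x y z n hp
    subst ha; subst hc
    simp [Int.mul_ediv_cancel_left _ (two_ne_zero)]
  · rintro ⟨⟨a, y, c⟩, hq⟩
    simp [Int.mul_ediv_cancel_left _ (two_ne_zero)]
end

section
/- For every integer n not divisible by 6, the equation 2x² + 3y² + 24z² = n² has no integer solutions, and likewise 5x² + 2xy + 5y² + 6z² = n² has no integer solutions. -/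
private lemma l3a : ∀ a b c d : ZMod 3, d ≠ 0 →
    2 * a ^ 2 + 3 * b ^ 2 + 24 * c ^ 2 ≠ d ^ 2 := by decide

private lemma l3b : ∀ a b c d : ZMod 3, d ≠ 0 →
    5 * a ^ 2 + 2 * a * b + 5 * b ^ 2 + 6 * c ^ 2 ≠ d ^ 2 := by decide

private lemma l8a : ∀ a b c k : ZMod 8,
    2 * a ^ 2 + 3 * b ^ 2 + 24 * c ^ 2 ≠ (2 * k + 1) ^ 2 := by decide

private lemma l8b : ∀ a b c k : ZMod 8,
    5 * a ^ 2 + 2 * a * b + 5 * b ^ 2 + 6 * c ^ 2 ≠ (2 * k + 1) ^ 2 := by decide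

theorem stmt10 (n : ℤ) (hn : ¬ (6 : ℤ) ∣ n) :
    (¬ ∃ x y z : ℤ, 2 * x ^ 2 + 3 * y ^ 2 + 24 * z ^ 2 = n ^ 2) ∧
    (¬ ∃ x y z : ℤ, 5 * x ^ 2 + 2 * x * y + 5 * y ^ 2 + 6 * z ^ 2 = n ^ 2) := by
  have hcase : ¬ (2 : ℤ) ∣ n ∨ ¬ (3 : ℤ) ∣ n := by omega
  constructor
  · rintro ⟨x, y, z, h⟩
    rcases hcase with h2 | h3
    · obtain ⟨k, hk⟩ : ∃ k, n = 2 * k + 1 := ⟨n / 2, by omega⟩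
      subst hk
      have hc := congrArg (fun t : ℤ => (t : ZMod 8)) h
      push_cast at hc
      exact l8a _ _ _ _ hc
    · have hc := congrArg (fun t : ℤ => (t : ZMod 3)) h
      push_cast at hc
      refine l3a _ _ _ _ ?_ hc
      rw [Ne, ZMod.intCast_zmod_eq_zero_iff_dvd]
      exact_mod_cast h3
  · rintro ⟨x, y, z, h⟩
    rcases hcase with h2 | h3
    · obtain ⟨k, hk⟩ : ∃ k, n = 2 * k + 1 := ⟨n / 2, by omega⟩
      subst hk
      have hc := congrArg (fun t : ℤ => (t : ZMod 8)) h
      push_cast at hc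
      exact l8b _ _ _ _ hc
    · have hc := congrArg (fun t : ℤ => (t : ZMod 3)) h
      push_cast at hc
      refine l3b _ _ _ _ ?_ hc
      rw [Ne, ZMod.intCast_zmod_eq_zero_iff_dvd]
      exact_mod_cast h3
end

section
/- For every integer n, the number of integer solutions of 2x² + 3y² + 24z² = 36n² equals the number of integer solutions of x² + 2y² + 6z² = 3n². (If 2x² + 3y² + 24z² = 36n², then 6 ∣ x and 2 ∣ y.) -/
theorem stmt11 (n : ℤ) :
    Nat.card {p : ℤ × ℤ × ℤ |
        2 * p.1 ^ 2 + 3 * p.2.1 ^ 2 + 24 * p.2.2 ^ 2 = 36 * n ^ 2} =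
      Nat.card {p : ℤ × ℤ × ℤ |
        p.1 ^ 2 + 2 * p.2.1 ^ 2 + 6 * p.2.2 ^ 2 = 3 * n ^ 2} := by
  symm
  apply Nat.card_congr
  refine Equiv.ofBijective
    (fun p => ⟨(6 * p.1.2.2, 2 * p.1.1, p.1.2.1), ?_⟩) ⟨?_, ?_⟩
  · obtain ⟨⟨u, v, w⟩, hp⟩ := p
    simp only [Set.mem_setOf_eq] at hp ⊢
    ring_nf
    ring_nf at hp
    linarith
  · rintro ⟨⟨u, v, w⟩, hp⟩ ⟨⟨u', v', w'⟩, hp'⟩ h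
    simp only [Subtype.mk.injEq, Prod.mk.injEq] at h
    ext <;> simp <;> omega
  · rintro ⟨⟨x, y, z⟩, hp⟩
    simp only [Set.mem_setOf_eq] at hp
    have h3 : (3 : ℤ) ∣ x := by
      have h1 : (3 : ℤ) ∣ 2 * x ^ 2 := ⟨12 * n ^ 2 - y ^ 2 - 8 * z ^ 2, by linarith⟩
      have h2 : (3 : ℤ) ∣ x ^ 2 := by
        rcases (Int.prime_three.dvd_mul).mp h1 with h | h
        · norm_num at h
        · exact h
      exact Int.prime_three.dvd_of_dvd_pow h2
    have h2y : (2 : ℤ) ∣ y := by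
      have h1 : (2 : ℤ) ∣ 3 * y ^ 2 := ⟨18 * n ^ 2 - x ^ 2 - 12 * z ^ 2, by linarith⟩
      have h2 : (2 : ℤ) ∣ y ^ 2 := by
        rcases (Int.prime_two.dvd_mul).mp h1 with h | h
        · norm_num at h
        · exact h
      exact Int.prime_two.dvd_of_dvd_pow h2
    obtain ⟨a, ha⟩ := h3
    obtain ⟨b, hb⟩ := h2y
    have h2a : (2 : ℤ) ∣ a := by
      have heq : 3 * a ^ 2 + 2 * b ^ 2 + 4 * z ^ 2 = 6 * n ^ 2 := by
        subst ha hb; nlinarith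
      have h1 : (2 : ℤ) ∣ 3 * a ^ 2 := ⟨3 * n ^ 2 - b ^ 2 - 2 * z ^ 2, by linarith⟩
      have h2 : (2 : ℤ) ∣ a ^ 2 := by
        rcases (Int.prime_two.dvd_mul).mp h1 with h | h
        · norm_num at h
        · exact h
      exact Int.prime_two.dvd_of_dvd_pow h2
    obtain ⟨c, hc⟩ := h2a
    have hmem : b ^ 2 + 2 * z ^ 2 + 6 * c ^ 2 = 3 * n ^ 2 := by
      subst ha hb hc; nlinarith
    refine ⟨⟨(b, z, c), hmem⟩, ?_⟩
    simp only [Subtype.mk.injEq, Prod.mk.injEq]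
    refine ⟨?_, ?_, ?_⟩ <;> first | omega | trivial
end

section
/- Let n be a positive integer with n ≡ 1 (mod 8). Define A₁∪A₂ to be the set of solutions (x,y,z) ∈ ℤ³ of x² + 3y² + 5z² = n with x odd and y ≡ z (mod 2), and B₁∪B₂ the set of solutions (x,y,z) ∈ ℤ³ of x² + 2y² + 2yz + 8z² = n with x odd and y ≡ z (mod 2). Then the map f(x,y,z) = (x, (y+3z)/2, (y−z)/2) is a well-defined bijection from A₁∪A₂ to B₁∪B₂. -/
theorem stmt13 (n : ℕ) (hn : 0 < n) (h8 : n % 8 = 1) :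
    Set.BijOn (fun p : ℤ × ℤ × ℤ => (p.1, (p.2.1 + 3 * p.2.2) / 2, (p.2.1 - p.2.2) / 2))
      {p : ℤ × ℤ × ℤ | p.1 ^ 2 + 3 * p.2.1 ^ 2 + 5 * p.2.2 ^ 2 = (n : ℤ) ∧
        Odd p.1 ∧ p.2.1 % 2 = p.2.2 % 2}
      {p : ℤ × ℤ × ℤ |
        p.1 ^ 2 + 2 * p.2.1 ^ 2 + 2 * p.2.1 * p.2.2 + 8 * p.2.2 ^ 2 = (n : ℤ) ∧
        Odd p.1 ∧ p.2.1 % 2 = p.2.2 % 2} := by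
  refine ⟨?_, ?_, ?_⟩
  · rintro ⟨x, y, z⟩ ⟨heq, hodd, hpar⟩
    simp only [Set.mem_setOf_eq] at *
    obtain ⟨k, hk⟩ : ∃ k, y = z + 2 * k := ⟨(y - z) / 2, by omega⟩
    have hu : (y + 3 * z) / 2 = 2 * z + k := by omega
    have hv : (y - z) / 2 = k := by omega
    subst hk
    refine ⟨?_, hodd, ?_⟩
    · rw [hu, hv]; linear_combination heq
    · rw [hu, hv]; omega
  · rintro ⟨x, y, z⟩ ⟨heq, hodd, hpar⟩ ⟨x', y', z'⟩ ⟨heq', hodd', hpar'⟩ h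
    simp only [Prod.mk.injEq] at h
    obtain ⟨h1, h2, h3⟩ := h
    dsimp only at *
    simp only [Prod.mk.injEq]
    refine ⟨h1, ?_, ?_⟩ <;> omega
  · rintro ⟨x, u, v⟩ ⟨heq, hodd, hpar⟩
    simp only [Set.mem_setOf_eq] at *
    obtain ⟨m, hm⟩ : ∃ m, u = v + 2 * m := ⟨(u - v) / 2, by omega⟩
    refine ⟨(x, 2 * v + m, m), ⟨?_, hodd, by dsimp only; omega⟩, ?_⟩
    · subst hm; linear_combination heq
    · dsimp only
      simp only [Prod.mk.injEq, true_and]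
      constructor <;> omega
end

section
/- Let n be a positive integer with n ≡ 1 (mod 8). Let A₃⁰ be the set of (x,y,z) ∈ ℤ³ with x² + 3y² + 5z² = n, x ≡ y ≡ 0 (mod 2), z odd, and x − y − 2z ≡ 4 (mod 8); let B₃⁰ be the set of (x,y,z) ∈ ℤ³ with x² + 2y² + 2yz + 8z² = n, x and z odd, y ≡ 0 (mod 4), and 2x − y + 2z ≡ 0 (mod 8). Then g(x,y,z) = ((x+3y)/2, (x−y+2z)/2, (−x+y+2z)/4) maps A₃⁰ into B₃⁰, h(x,y,z) = ((2x+3y−6z)/4, (2x−y+2z)/4, (y+2z)/2) maps B₃⁰ into A₃⁰, and g and h are mutually inverse bijections. -/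
lemma aux_odd14 (x y z n : ℤ) (heq : x^2 + 3*y^2 + 5*z^2 = n)
    (hx : x % 2 = 0) (hy : y % 2 = 0) (hz : z % 2 = 1) (hn : n % 8 = 1) :
    (x + 3*y) % 4 = 2 := by
  obtain ⟨u, hu⟩ : ∃ u, x = 2*u := ⟨x/2, by omega⟩
  obtain ⟨v, hv⟩ : ∃ v, y = 2*v := ⟨y/2, by omega⟩
  obtain ⟨w, hw⟩ : ∃ w, z = 2*w + 1 := ⟨z/2, by omega⟩
  obtain ⟨m, hm⟩ : ∃ m, w*(w+1) = 2*m := by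
    rcases Int.even_mul_succ_self w with ⟨m, h⟩; exact ⟨m, by omega⟩
  have hz2 : z^2 = 8*m + 1 := by rw [hw]; linear_combination 4*hm
  subst hu hv
  rcases Int.even_or_odd u with ⟨s, hs⟩ | ⟨s, hs⟩ <;>
    rcases Int.even_or_odd v with ⟨t, ht⟩ | ⟨t, ht⟩
  · have key : 16*s^2 + 48*t^2 + 40*m + 5 = n := by
      rw [← heq, hz2]; linear_combination (-(4*u + 8*s))*hs + (-(12*v + 24*t))*ht
    generalize s^2 = S at key; generalize t^2 = T at key; omega
  · have key : 16*s^2 + 48*t^2 + 48*t + 40*m + 17 = n := by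
      rw [← heq, hz2]; linear_combination (-(4*u + 8*s))*hs + (-(12*v + 24*t + 12))*ht
    generalize s^2 = S at key; generalize t^2 = T at key; omega
  · have key : 16*s^2 + 16*s + 48*t^2 + 40*m + 9 = n := by
      rw [← heq, hz2]; linear_combination (-(4*u + 8*s + 4))*hs + (-(12*v + 24*t))*ht
    generalize s^2 = S at key; generalize t^2 = T at key; omega
  · have key : 16*s^2 + 16*s + 48*t^2 + 48*t + 40*m + 21 = n := by
      rw [← heq, hz2]; linear_combination (-(4*u + 8*s + 4))*hs + (-(12*v + 24*t + 12))*ht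
    generalize s^2 = S at key; generalize t^2 = T at key; omega

theorem stmt14 (n : ℕ) (hn : 0 < n) (h8 : n % 8 = 1)
    (A B : Set (ℤ × ℤ × ℤ))
    (hA : A = {p : ℤ × ℤ × ℤ | p.1 ^ 2 + 3 * p.2.1 ^ 2 + 5 * p.2.2 ^ 2 = (n : ℤ) ∧
      p.1 % 2 = 0 ∧ p.2.1 % 2 = 0 ∧ Odd p.2.2 ∧ (p.1 - p.2.1 - 2 * p.2.2) % 8 = 4})
    (hB : B = {p : ℤ × ℤ × ℤ |
      p.1 ^ 2 + 2 * p.2.1 ^ 2 + 2 * p.2.1 * p.2.2 + 8 * p.2.2 ^ 2 = (n : ℤ) ∧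
      Odd p.1 ∧ Odd p.2.2 ∧ p.2.1 % 4 = 0 ∧ (2 * p.1 - p.2.1 + 2 * p.2.2) % 8 = 0})
    (g h : ℤ × ℤ × ℤ → ℤ × ℤ × ℤ)
    (hg : g = fun p => ((p.1 + 3 * p.2.1) / 2, (p.1 - p.2.1 + 2 * p.2.2) / 2,
      (-p.1 + p.2.1 + 2 * p.2.2) / 4))
    (hh : h = fun p => ((2 * p.1 + 3 * p.2.1 - 6 * p.2.2) / 4,
      (2 * p.1 - p.2.1 + 2 * p.2.2) / 4, (p.2.1 + 2 * p.2.2) / 2)) :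
    Set.MapsTo g A B ∧ Set.MapsTo h B A ∧
    (∀ p ∈ A, h (g p) = p) ∧ (∀ p ∈ B, g (h p) = p) := by
  subst hA hB hg hh
  refine ⟨?_, ?_, ?_, ?_⟩
  · -- g maps A to B
    rintro ⟨x, y, z⟩ ⟨heq, hx, hy, hzo, hm8⟩
    simp only [Set.mem_setOf_eq] at heq hx hy hzo hm8 ⊢
    have hz : z % 2 = 1 := Int.odd_iff.mp hzo
    obtain ⟨a, ha⟩ : ∃ a, x + 3*y = 2*a := ⟨(x + 3*y)/2, by omega⟩
    obtain ⟨b, hb⟩ : ∃ b, x - y + 2*z = 2*b := ⟨(x - y + 2*z)/2, by omega⟩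
    obtain ⟨c, hc⟩ : ∃ c, -x + y + 2*z = 4*c := ⟨(-x + y + 2*z)/4, by omega⟩
    have e1 : (x + 3*y)/2 = a := by omega
    have e2 : (x - y + 2*z)/2 = b := by omega
    have e3 : (-x + y + 2*z)/4 = c := by omega
    rw [e1, e2, e3]
    have haux : (x + 3*y) % 4 = 2 := aux_odd14 x y z n heq hx hy hz (by omega)
    have h4 : 4*(a^2 + 2*b^2 + 2*b*c + 8*c^2) = 4*(n:ℤ) := by
      linear_combination (-(x + 3*y + 2*a))*ha + (-2*(x - y + 2*z + 2*b) - (-x + y + 2*z))*hb +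
        (-2*b - 2*(-x + y + 2*z + 4*c))*hc + 4*heq
    refine ⟨by linarith, Int.odd_iff.mpr (by omega), Int.odd_iff.mpr (by omega), by omega, by omega⟩
  · -- h maps B to A
    rintro ⟨x, y, z⟩ ⟨heq, hxo, hzo, hy4, hm8⟩
    simp only [Set.mem_setOf_eq] at heq hxo hzo hy4 hm8 ⊢
    have hx : x % 2 = 1 := Int.odd_iff.mp hxo
    have hz : z % 2 = 1 := Int.odd_iff.mp hzo
    obtain ⟨a, ha⟩ : ∃ a, 2*x + 3*y - 6*z = 4*a := ⟨(2*x + 3*y - 6*z)/4, by omega⟩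
    obtain ⟨b, hb⟩ : ∃ b, 2*x - y + 2*z = 4*b := ⟨(2*x - y + 2*z)/4, by omega⟩
    obtain ⟨c, hc⟩ : ∃ c, y + 2*z = 2*c := ⟨(y + 2*z)/2, by omega⟩
    have e1 : (2*x + 3*y - 6*z)/4 = a := by omega
    have e2 : (2*x - y + 2*z)/4 = b := by omega
    have e3 : (y + 2*z)/2 = c := by omega
    rw [e1, e2, e3]
    have h16 : 16*(a^2 + 3*b^2 + 5*c^2) = 16*(n:ℤ) := by
      linear_combination (-(2*x + 3*y - 6*z + 4*a))*ha + (-3*(2*x - y + 2*z + 4*b))*hb +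
        (-20*(y + 2*z + 2*c))*hc + 16*heq
    refine ⟨by linarith, by omega, by omega, Int.odd_iff.mpr (by omega), by omega⟩
  · -- h ∘ g = id on A
    rintro ⟨x, y, z⟩ ⟨heq, hx, hy, hzo, hm8⟩
    simp only [Set.mem_setOf_eq] at hx hy hzo hm8
    have hz : z % 2 = 1 := Int.odd_iff.mp hzo
    simp only [Prod.mk.injEq]
    refine ⟨by omega, by omega, by omega⟩
  · -- g ∘ h = id on B
    rintro ⟨x, y, z⟩ ⟨heq, hxo, hzo, hy4, hm8⟩
    simp only [Set.mem_setOf_eq] at hxo hzo hy4 hm8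
    have hx : x % 2 = 1 := Int.odd_iff.mp hxo
    have hz : z % 2 = 1 := Int.odd_iff.mp hzo
    simp only [Prod.mk.injEq]
    refine ⟨by omega, by omega, by omega⟩
end

section
/- Let n be a positive integer with n ≡ 1 (mod 8). The set A₃ of (x,y,z) ∈ ℤ³ with x² + 3y² + 5z² = n, x ≡ y ≡ 0 (mod 2), z odd, satisfies |A₃| = 2·|A₃⁰|, where A₃⁰ = {(x,y,z) ∈ A₃ : x − y − 2z ≡ 4 (mod 8)}. -/
private lemma keyZ (u v w : ZMod 8)
    (hu : ∃ a, u = 2*a) (hv : ∃ b, v = 2*b) (hw : ∃ c, w = 2*c+1)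
    (h : u^2+3*v^2+5*w^2 = 1) :
    (u-v-2*w = 4 ↔ u-v+2*w = 0) ∧ (u-v-2*w = 4 ∨ u-v-2*w = 0) := by
  revert h hw hv hu; revert u v w; decide

private lemma emod4 (x : ℤ) : x % 8 = 4 ↔ (x : ZMod 8) = 4 := by
  constructor
  · intro h
    have : ((x : ℤ) : ZMod 8) = ((4:ℤ) : ZMod 8) :=
      (ZMod.intCast_eq_intCast_iff x 4 8).mpr (show x % ((8:ℕ):ℤ) = 4 % ((8:ℕ):ℤ) by push_cast; omega)
    simpa using this
  · intro h
    have h2 := (ZMod.intCast_eq_intCast_iff x 4 8).mp (by simpa using h)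
    have h3 : x % ((8:ℕ):ℤ) = 4 % ((8:ℕ):ℤ) := h2
    push_cast at h3
    omega

private lemma emod0 (x : ℤ) : x % 8 = 0 ↔ (x : ZMod 8) = 0 := by
  rw [ZMod.intCast_zmod_eq_zero_iff_dvd]
  push_cast
  omega

theorem stmt15 (n : ℕ) (hn : 0 < n) (h8 : n % 8 = 1) :
    Nat.card {p : ℤ × ℤ × ℤ | p.1 ^ 2 + 3 * p.2.1 ^ 2 + 5 * p.2.2 ^ 2 = (n : ℤ) ∧
        p.1 % 2 = 0 ∧ p.2.1 % 2 = 0 ∧ Odd p.2.2} =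
      2 * Nat.card {p : ℤ × ℤ × ℤ | (p.1 ^ 2 + 3 * p.2.1 ^ 2 + 5 * p.2.2 ^ 2 = (n : ℤ) ∧
        p.1 % 2 = 0 ∧ p.2.1 % 2 = 0 ∧ Odd p.2.2) ∧
        (p.1 - p.2.1 - 2 * p.2.2) % 8 = 4} := by
  set S : Set (ℤ × ℤ × ℤ) := {p : ℤ × ℤ × ℤ | p.1 ^ 2 + 3 * p.2.1 ^ 2 + 5 * p.2.2 ^ 2 = (n : ℤ) ∧
        p.1 % 2 = 0 ∧ p.2.1 % 2 = 0 ∧ Odd p.2.2} with hSdef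
  set S0 : Set (ℤ × ℤ × ℤ) := {p : ℤ × ℤ × ℤ | (p.1 ^ 2 + 3 * p.2.1 ^ 2 + 5 * p.2.2 ^ 2 = (n : ℤ) ∧
        p.1 % 2 = 0 ∧ p.2.1 % 2 = 0 ∧ Odd p.2.2) ∧
        (p.1 - p.2.1 - 2 * p.2.2) % 8 = 4} with hS0def
  set S1 : Set (ℤ × ℤ × ℤ) := {p : ℤ × ℤ × ℤ | (p.1 ^ 2 + 3 * p.2.1 ^ 2 + 5 * p.2.2 ^ 2 = (n : ℤ) ∧
        p.1 % 2 = 0 ∧ p.2.1 % 2 = 0 ∧ Odd p.2.2) ∧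
        (p.1 - p.2.1 - 2 * p.2.2) % 8 = 0} with hS1def
  have hmod : ∀ p : ℤ × ℤ × ℤ, p ∈ S →
      ((p.1 - p.2.1 - 2 * p.2.2) % 8 = 4 ↔ (p.1 - p.2.1 + 2 * p.2.2) % 8 = 0) ∧
      ((p.1 - p.2.1 - 2 * p.2.2) % 8 = 4 ∨ (p.1 - p.2.1 - 2 * p.2.2) % 8 = 0) := by
    rintro ⟨x, y, z⟩ ⟨heq, hx, hy, hz⟩
    dsimp only at heq hx hy hz ⊢
    have hu : ∃ a : ZMod 8, (x : ZMod 8) = 2*a := by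
      obtain ⟨k, hk⟩ : ∃ k, x = 2*k := ⟨x/2, by omega⟩
      exact ⟨(k : ZMod 8), by rw [hk]; push_cast; ring⟩
    have hv : ∃ b : ZMod 8, (y : ZMod 8) = 2*b := by
      obtain ⟨k, hk⟩ : ∃ k, y = 2*k := ⟨y/2, by omega⟩
      exact ⟨(k : ZMod 8), by rw [hk]; push_cast; ring⟩
    have hw : ∃ c : ZMod 8, (z : ZMod 8) = 2*c+1 := by
      obtain ⟨k, hk⟩ := hz
      exact ⟨(k : ZMod 8), by rw [hk]; push_cast; ring⟩
    have hsum : (x : ZMod 8)^2 + 3*(y : ZMod 8)^2 + 5*(z : ZMod 8)^2 = 1 := by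
      have hc : ((x^2 + 3*y^2 + 5*z^2 : ℤ) : ZMod 8) = ((n : ℤ) : ZMod 8) := by
        exact_mod_cast congrArg (fun t : ℤ => (t : ZMod 8)) heq
      have hn8 : ((n:ℕ) : ZMod 8) = 1 := by
        have : ((n % 8 : ℕ) : ZMod 8) = ((n:ℕ) : ZMod 8) := ZMod.natCast_mod n 8
        rw [h8] at this
        simpa using this.symm
      push_cast at hc
      rw [hn8] at hc
      exact hc
    obtain ⟨h1, h2⟩ := keyZ _ _ _ hu hv hw hsum
    constructor
    · rw [emod4, emod0]; push_cast; exact h1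
    · rw [emod4, emod0]; push_cast; exact h2
  have hfin : S.Finite := by
    apply Set.Finite.subset (Set.finite_Icc (-(n:ℤ), -(n:ℤ), -(n:ℤ)) ((n:ℤ), (n:ℤ), (n:ℤ)))
    rintro ⟨x, y, z⟩ ⟨heq, -⟩
    simp only [Set.mem_Icc, Prod.le_def]
    refine ⟨⟨?_, ?_, ?_⟩, ?_, ?_, ?_⟩ <;>
      nlinarith [sq_nonneg x, sq_nonneg y, sq_nonneg z, sq_nonneg (x+1), sq_nonneg (x-1),
        sq_nonneg (y+1), sq_nonneg (y-1), sq_nonneg (z+1), sq_nonneg (z-1)]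
  have hfin0 : S0.Finite := hfin.subset (fun p hp => hp.1)
  have hfin1 : S1.Finite := hfin.subset (fun p hp => hp.1)
  have hf_inj : Function.Injective (fun p : ℤ × ℤ × ℤ => (p.1, p.2.1, -p.2.2)) := by
    rintro ⟨a, b, c⟩ ⟨d, e, f⟩ h
    simp only [Prod.mk.injEq] at h
    obtain ⟨h1, h2, h3⟩ := h
    simp only [Prod.mk.injEq]
    exact ⟨h1, h2, by omega⟩
  have himg : (fun p : ℤ × ℤ × ℤ => (p.1, p.2.1, -p.2.2)) '' S0 = S1 := by
    ext ⟨x, y, z⟩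
    simp only [Set.mem_image, Set.mem_setOf_eq]
    constructor
    · rintro ⟨⟨a, b, c⟩, ⟨⟨heq, ha, hb, hc⟩, hm⟩, hpe⟩
      simp only [Prod.mk.injEq] at hpe
      obtain ⟨h1, h2, h3⟩ := hpe
      subst h1; subst h2
      have hz' : z = -c := h3.symm
      subst hz'
      have hS : (a, b, c) ∈ S := ⟨heq, ha, hb, hc⟩
      have hres := (hmod _ hS).1.mp hm
      refine ⟨⟨by rw [← heq]; ring, ha, hb, hc.neg⟩, ?_⟩
      show (a - b - 2 * -c) % 8 = 0
      rw [show a - b - 2 * -c = a - b + 2*c by ring]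
      exact hres
    · rintro ⟨⟨heq, hx, hy, hz⟩, hm⟩
      have hS' : (x, y, -z) ∈ S := ⟨by rw [← heq]; ring, hx, hy, hz.neg⟩
      refine ⟨(x, y, -z), ⟨⟨by rw [← heq]; ring, hx, hy, hz.neg⟩, ?_⟩, by simp⟩
      show (x - y - 2 * -z) % 8 = 4
      apply (hmod _ hS').1.mpr
      show (x - y + 2 * -z) % 8 = 0
      rw [show x - y + 2 * -z = x - y - 2*z by ring]
      exact hm
  have hunion : S = S0 ∪ S1 := by
    ext p
    constructor
    · intro hp
      rcases (hmod p hp).2 with h | h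
      · exact Or.inl ⟨hp, h⟩
      · exact Or.inr ⟨hp, h⟩
    · rintro (⟨hp, -⟩ | ⟨hp, -⟩) <;> exact hp
  have hdisj : Disjoint S0 S1 := by
    rw [Set.disjoint_left]
    rintro p ⟨-, h4⟩ ⟨-, h0⟩
    omega
  rw [Nat.card_coe_set_eq, Nat.card_coe_set_eq, hunion,
    Set.ncard_union_eq hdisj hfin0 hfin1, ← himg,
    Set.ncard_image_of_injective _ hf_inj]
  ring
end
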